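/- arXiv:1512.01955 — 4 statements merged into one kernel-verified Lean document; each statement's English description precedes it below -/
import Mathlib

section
/- In finite dimensions, the Kalman filter covariances satisfy the closed-form product formula ∏_{j=1}^n (I - K_j A) = C_n C_0^{-1} = (C_0^{-1} + (n/γ²) A^* A)^{-1} C_0^{-1}, where the product is ordered with j = n applied last. -/
open Matrix

lemma kalman_aux {d m : ℕ} (Ci Cn : Matrix (Fin d) (Fin d) ℝ)
    (A X : Matrix (Fin m) (Fin d) ℝ) (c γ2 : ℝ)
    (h1 : Ci * Cn = 1) (hc : c * γ2 = 1)
    (hX : A * (Cn * (Aᵀ * X)) = A * Cn - γ2 • X) :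
    (Ci + c • (Aᵀ * A)) * (Cn - Cn * Aᵀ * X) = 1 := by
  have hcancel : ∀ Y : Matrix (Fin d) (Fin d) ℝ, Ci * (Cn * Y) = Y := fun Y => by
    rw [← Matrix.mul_assoc, h1, Matrix.one_mul]
  simp only [Matrix.add_mul, Matrix.mul_sub, Matrix.smul_mul, Matrix.mul_smul,
    Matrix.mul_assoc, h1, hcancel, hX, smul_sub, smul_smul, hc, one_smul]
  abel

/-- Closed-form product formula for the Kalman filter in finite dimensions:
with `Kₙ = Cₙ₋₁ Aᵀ (A Cₙ₋₁ Aᵀ + γ² I)⁻¹` and `Cₙ = (I - Kₙ A) Cₙ₋₁`, `C₀`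
symmetric positive definite, the ordered product `Pₙ = ∏_{j=1}^n (I - Kⱼ A)`
(with `j = n` applied last) satisfies
`Pₙ = Cₙ C₀⁻¹ = (C₀⁻¹ + (n/γ²) Aᵀ A)⁻¹ C₀⁻¹`. -/
theorem kalman_product_formula {d m : ℕ}
    (A : Matrix (Fin m) (Fin d) ℝ) (γ : ℝ) (hγ : 0 < γ)
    (C : ℕ → Matrix (Fin d) (Fin d) ℝ) (K : ℕ → Matrix (Fin d) (Fin m) ℝ)
    (hC0 : (C 0).PosDef)
    (hK : ∀ n : ℕ, K (n + 1) =
      C n * Aᵀ * (A * C n * Aᵀ + γ ^ 2 • (1 : Matrix (Fin m) (Fin m) ℝ))⁻¹)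
    (hC : ∀ n : ℕ, C (n + 1) = (1 - K (n + 1) * A) * C n)
    (P : ℕ → Matrix (Fin d) (Fin d) ℝ)
    (hP0 : P 0 = 1)
    (hPs : ∀ n : ℕ, P (n + 1) = (1 - K (n + 1) * A) * P n) :
    ∀ n : ℕ, P n = C n * (C 0)⁻¹ ∧
      P n = ((C 0)⁻¹ + ((n : ℝ) / γ ^ 2) • (Aᵀ * A))⁻¹ * (C 0)⁻¹ := by
  have hγ2 : (0:ℝ) < γ ^ 2 := by positivity
  have hATA : ((γ ^ 2)⁻¹ • (Aᵀ * A)).PosSemidef := by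
    have h := posSemidef_conjTranspose_mul_self ((γ⁻¹ : ℝ) • A)
    have he : ((γ⁻¹ : ℝ) • A)ᴴ * ((γ⁻¹ : ℝ) • A) = (γ ^ 2)⁻¹ • (Aᵀ * A) := by
      rw [conjTranspose_smul, conjTranspose_eq_transpose_of_trivial, star_trivial,
        Matrix.smul_mul, Matrix.mul_smul, smul_smul, ← mul_inv, ← sq]
    rwa [he] at h
  -- the key invariant
  have key : ∀ n : ℕ, (C n).PosDef ∧
      (C n)⁻¹ = (C 0)⁻¹ + ((n : ℝ) / γ ^ 2) • (Aᵀ * A) := by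
    intro n
    induction n with
    | zero => simp [hC0]
    | succ n ih =>
      obtain ⟨hpd, hinv⟩ := ih
      have hS : (A * C n * Aᵀ + γ ^ 2 • (1 : Matrix (Fin m) (Fin m) ℝ)).PosDef := by
        apply Matrix.PosDef.posSemidef_add
        · have := hpd.posSemidef.mul_mul_conjTranspose_same A
          rwa [conjTranspose_eq_transpose_of_trivial] at this
        · rw [smul_one_eq_diagonal]
          exact posDef_diagonal_iff.mpr fun i => hγ2
      have hSdet : IsUnit (A * C n * Aᵀ + γ ^ 2 • (1 : Matrix (Fin m) (Fin m) ℝ)).det :=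
        (Matrix.isUnit_iff_isUnit_det _).mp hS.isUnit
      have hCndet : IsUnit (C n).det := (Matrix.isUnit_iff_isUnit_det _).mp hpd.isUnit
      set T := (A * C n * Aᵀ + γ ^ 2 • (1 : Matrix (Fin m) (Fin m) ℝ))⁻¹ with hTdef
      have h1 : (A * C n * Aᵀ + γ ^ 2 • (1 : Matrix (Fin m) (Fin m) ℝ)) * (T * (A * C n))
          = A * C n := by
        rw [hTdef, ← Matrix.mul_assoc, Matrix.mul_nonsing_inv _ hSdet, Matrix.one_mul]
      rw [Matrix.add_mul, Matrix.smul_mul, Matrix.one_mul] at h1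
      have hXeq : A * (C n * (Aᵀ * (T * (A * C n))))
          = A * C n - γ ^ 2 • (T * (A * C n)) := by
        rw [eq_sub_iff_add_eq]
        conv_rhs => rw [← h1]
        simp only [Matrix.mul_assoc]
      have hC1 : C (n + 1) = C n - C n * Aᵀ * (T * (A * C n)) := by
        rw [hC n, hK n, Matrix.sub_mul, Matrix.one_mul, ← hTdef]
        congr 1
        simp only [Matrix.mul_assoc]
      have hmain : ((C n)⁻¹ + (γ ^ 2)⁻¹ • (Aᵀ * A)) * C (n + 1) = 1 := by
        rw [hC1]
        exact kalman_aux (C n)⁻¹ (C n) A (T * (A * C n)) (γ ^ 2)⁻¹ (γ ^ 2)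
          (Matrix.nonsing_inv_mul _ hCndet) (inv_mul_cancel₀ hγ2.ne') hXeq
      have hCinv : (C (n + 1))⁻¹ = (C n)⁻¹ + (γ ^ 2)⁻¹ • (Aᵀ * A) :=
        Matrix.inv_eq_left_inv hmain
      have hMpd : ((C n)⁻¹ + (γ ^ 2)⁻¹ • (Aᵀ * A)).PosDef :=
        hpd.inv.add_posSemidef hATA
      constructor
      · exact Matrix.posDef_inv_iff.mp (hCinv ▸ hMpd)
      · rw [hCinv, hinv, add_assoc, ← add_smul]
        congr 1
        push_cast
        field_simp
  -- first claim by induction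
  have first : ∀ n : ℕ, P n = C n * (C 0)⁻¹ := by
    intro n
    induction n with
    | zero =>
      rw [hP0, Matrix.mul_nonsing_inv _ ((Matrix.isUnit_iff_isUnit_det _).mp hC0.isUnit)]
    | succ n ih => rw [hPs n, ih, hC n, Matrix.mul_assoc]
  intro n
  refine ⟨first n, ?_⟩
  obtain ⟨hpd, hinv⟩ := key n
  rw [first n, ← hinv,
    Matrix.nonsing_inv_nonsing_inv _ ((Matrix.isUnit_iff_isUnit_det _).mp hpd.isUnit)]
end

section
/- Let Σ₀ be symmetric positive definite, B₀ = A Σ₀^{1/2}, α > 0, γ > 0, C₀ = (γ²/α) Σ₀, and F = (C₀^{-1} + n γ^{-2} A^* A)^{-1} A^* / γ². Then F = Σ₀^{1/2} (α I + n B₀^* B₀)^{-1} B₀^* and tr(F F^*) ≤ (1/(α n)) tr(Σ₀). -/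
/-!
Write `R = Σ₀^{1/2}`, a symmetric invertible matrix with `R * R = Σ₀`, and `B₀ = A R`. The
precision `C₀⁻¹ + n γ⁻² AᵀA` factors as `γ⁻² R⁻¹ (α I + n B₀ᵀB₀) R⁻¹`, which gives the formula
for `F`. With `P = B₀ᵀB₀` and `M = α I + n P` this yields `F Fᵀ = R (M⁻¹ P M⁻¹) R`, and
`M⁻¹ P M⁻¹ ≤ (α n)⁻¹ I` in the Loewner order because `(α n)⁻¹ M² - P = (α/n) I + P + (n/α) P²`
is positive semidefinite. Conjugating by `R` and taking traces gives `tr(F Fᵀ) ≤ tr(Σ₀)/(α n)`.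
-/

open Matrix

/-- The square root of a positive semidefinite matrix, as defined in the older Mathlib
(`Matrix.PosSemidef.sqrt`, since removed). -/
noncomputable def Matrix.PosSemidef.sqrt {n 𝕜 : Type*} [Fintype n] [RCLike 𝕜] [PartialOrder 𝕜] [StarOrderedRing 𝕜]
    [DecidableEq n]
    {A : Matrix n n 𝕜} (hA : A.PosSemidef) : Matrix n n 𝕜 :=
  hA.1.eigenvectorUnitary.1 * diagonal ((↑) ∘ (√·) ∘ hA.1.eigenvalues) *
    (star hA.1.eigenvectorUnitary : Matrix n n 𝕜)

namespace Matrix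

variable {ι κ : Type*} [Fintype ι] [DecidableEq ι] [Fintype κ]

theorem inv_smul₀ {K : Type*} [Field K] (k : K) (A : Matrix ι ι K) :
    (k • A)⁻¹ = k⁻¹ • A⁻¹ := by
  rcases eq_or_ne k 0 with rfl | hk
  · simp
  by_cases hA : IsUnit A.det
  · exact Matrix.inv_smul' A (Units.mk0 k hk) hA
  · have hkA : ¬IsUnit (k • A).det := by simpa [det_smul, hk] using hA
    rw [nonsing_inv_apply_not_isUnit _ hA, nonsing_inv_apply_not_isUnit _ hkA, smul_zero]

namespace PosSemidef

variable {S : Matrix ι ι ℝ}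

theorem posSemidef_sqrt (hS : S.PosSemidef) : hS.sqrt.PosSemidef :=
  (PosSemidef.diagonal fun _ => Real.sqrt_nonneg _).mul_mul_conjTranspose_same _

theorem transpose_sqrt (hS : S.PosSemidef) : hS.sqrtᵀ = hS.sqrt := by
  simpa [IsHermitian] using hS.posSemidef_sqrt.1

theorem sqrt_mul_self (hS : S.PosSemidef) : hS.sqrt * hS.sqrt = S := by
  have hU : (star hS.1.eigenvectorUnitary : Matrix ι ι ℝ) * hS.1.eigenvectorUnitary = 1 :=
    Unitary.coe_star_mul_self _
  conv_rhs => rw [hS.1.spectral_theorem, Unitary.conjStarAlgAut_apply]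
  simp only [sqrt, Matrix.mul_assoc, ← Matrix.mul_assoc _ (hS.1.eigenvectorUnitary : Matrix ι ι ℝ),
    hU, Matrix.one_mul]
  rw [← Matrix.mul_assoc (diagonal _), diagonal_mul_diagonal]
  congr 3
  funext i
  exact Real.mul_self_sqrt (hS.eigenvalues_nonneg i)

end PosSemidef

theorem PosDef.isUnit_sqrt {S : Matrix ι ι ℝ} (hS : S.PosDef) : IsUnit hS.posSemidef.sqrt :=
  isUnit_of_mul_isUnit_left (hS.posSemidef.sqrt_mul_self ▸ hS.isUnit)

section Whitening

variable {K : Type*} [Field K] {R : Matrix ι ι K}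

theorem smul_inv_mul_self_add_smul_transpose_mul (hR : IsUnit R) (hRt : Rᵀ = R)
    (A : Matrix κ ι K) (a t : K) :
    a • (R * R)⁻¹ + t • (Aᵀ * A) = R⁻¹ * (a • 1 + t • ((A * R)ᵀ * (A * R))) * R⁻¹ := by
  have hdet : IsUnit R.det := (isUnit_iff_isUnit_det R).mp hR
  simp only [Matrix.mul_inv_rev, Matrix.mul_add, Matrix.add_mul, Matrix.mul_smul,
    Matrix.smul_mul, Matrix.mul_one, transpose_mul, hRt, Matrix.mul_assoc,
    Matrix.nonsing_inv_mul_cancel_left _ _ hdet, Matrix.mul_nonsing_inv _ hdet]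

theorem inv_smul_inv_mul_self_add_smul_transpose_mul_mul_transpose (hR : IsUnit R)
    (hRt : Rᵀ = R) (A : Matrix κ ι K) (a t : K) :
    (a • (R * R)⁻¹ + t • (Aᵀ * A))⁻¹ * Aᵀ =
      R * (a • 1 + t • ((A * R)ᵀ * (A * R)))⁻¹ * (A * R)ᵀ := by
  have hdet : IsUnit R.det := (isUnit_iff_isUnit_det R).mp hR
  rw [smul_inv_mul_self_add_smul_transpose_mul hR hRt, Matrix.mul_inv_rev, Matrix.mul_inv_rev,
    nonsing_inv_nonsing_inv _ hdet, transpose_mul, hRt]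
  simp only [Matrix.mul_assoc]

end Whitening

theorem posSemidef_inv_smul_one_sub_inv_mul_mul_inv {P : Matrix ι ι ℝ} (hP : P.PosSemidef)
    {a t : ℝ} (ha : 0 < a) (ht : 0 < t) :
    ((a * t)⁻¹ • 1 - (a • 1 + t • P)⁻¹ * P * (a • 1 + t • P)⁻¹).PosSemidef := by
  set M := a • (1 : Matrix ι ι ℝ) + t • P with hMdef
  have hM : M.PosDef := (PosDef.one.smul ha).add_posSemidef (hP.smul ht.le)
  have hdet : IsUnit M.det := (isUnit_iff_isUnit_det M).mp hM.isUnit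
  have hMinv : (M⁻¹)ᴴ = M⁻¹ := by rw [conjTranspose_nonsing_inv, hM.1.eq]
  have hPP : (P * P).PosSemidef := by
    simpa only [hP.1.eq] using posSemidef_conjTranspose_mul_self P
  have hsquare : (a * t)⁻¹ • (M * M) - P = (a / t) • 1 + P + (t / a) • (P * P) := by
    simp only [hMdef, Matrix.mul_add, Matrix.add_mul, Matrix.mul_smul, Matrix.smul_mul,
      Matrix.mul_one, Matrix.one_mul, smul_smul, smul_add]
    match_scalars <;> field_simp; norm_num
  have hY : ((a * t)⁻¹ • (M * M) - P).PosSemidef := hsquare ▸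
    ((PosSemidef.one.smul (div_pos ha ht).le).add hP).add (hPP.smul (div_pos ht ha).le)
  convert hY.conjTranspose_mul_mul_same M⁻¹ using 1
  simp only [hMinv, Matrix.mul_sub, Matrix.sub_mul, Matrix.mul_smul, Matrix.smul_mul,
    Matrix.mul_assoc, Matrix.nonsing_inv_mul_cancel_left _ _ hdet, Matrix.mul_nonsing_inv _ hdet]

theorem trace_mul_mul_transpose_le {X : Matrix ι ι ℝ} {c : ℝ} (h : (c • 1 - X).PosSemidef)
    (R : Matrix κ ι ℝ) : (R * X * Rᵀ).trace ≤ c * (R * Rᵀ).trace := by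
  have hconj := (h.mul_mul_conjTranspose_same R).trace_nonneg
  rw [conjTranspose_eq_transpose_of_trivial, Matrix.mul_sub, Matrix.sub_mul, trace_sub,
    Matrix.mul_smul, Matrix.smul_mul, Matrix.mul_one, trace_smul, smul_eq_mul] at hconj
  linarith

end Matrix

/-- With `Σ₀` symmetric positive definite, `B₀ = A Σ₀^{1/2}`, `C₀ = (γ²/α) Σ₀`
and `F = (C₀⁻¹ + n γ⁻² Aᵀ A)⁻¹ Aᵀ / γ²`, one has
`F = Σ₀^{1/2} (α I + n B₀ᵀ B₀)⁻¹ B₀ᵀ` and `tr(F Fᵀ) ≤ tr(Σ₀)/(α n)`. -/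
theorem kalman_variance_operator_formula {d m : ℕ}
    (A : Matrix (Fin m) (Fin d) ℝ) (S0 : Matrix (Fin d) (Fin d) ℝ)
    (hS : S0.PosDef) (α γ : ℝ) (hα : 0 < α) (hγ : 0 < γ) (n : ℕ) (hn : 1 ≤ n)
    (B₀ : Matrix (Fin m) (Fin d) ℝ) (hB : B₀ = A * hS.posSemidef.sqrt)
    (C₀ : Matrix (Fin d) (Fin d) ℝ) (hC₀ : C₀ = (γ ^ 2 / α) • S0)
    (F : Matrix (Fin d) (Fin m) ℝ)
    (hF : F = (γ ^ 2)⁻¹ • ((C₀⁻¹ + ((n : ℝ) / γ ^ 2) • (Aᵀ * A))⁻¹ * Aᵀ)) :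
    F = hS.posSemidef.sqrt *
        (α • (1 : Matrix (Fin d) (Fin d) ℝ) + (n : ℝ) • (B₀ᵀ * B₀))⁻¹ * B₀ᵀ ∧
    (F * Fᵀ).trace ≤ S0.trace / (α * n) := by
  set R := hS.posSemidef.sqrt
  set M := α • (1 : Matrix (Fin d) (Fin d) ℝ) + (n : ℝ) • (B₀ᵀ * B₀) with hMdef
  have hRR : R * R = S0 := hS.posSemidef.sqrt_mul_self
  have hRt : Rᵀ = R := hS.posSemidef.transpose_sqrt
  have hrescale : (α / γ ^ 2) • 1 + ((n : ℝ) / γ ^ 2) • (B₀ᵀ * B₀) = (γ ^ 2)⁻¹ • M := by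
    simp only [hMdef, smul_add, smul_smul]
    ring_nf
  have hFR : F = R * M⁻¹ * B₀ᵀ := by
    rw [hF, hC₀, inv_smul₀, inv_div, ← hRR,
      inv_smul_inv_mul_self_add_smul_transpose_mul_mul_transpose hS.isUnit_sqrt hRt, ← hB,
      hrescale, inv_smul₀, inv_inv, Matrix.mul_smul, Matrix.smul_mul, smul_smul,
      inv_mul_cancel₀ (by positivity), one_smul]
  refine ⟨hFR, ?_⟩
  have hn' : (0 : ℝ) < n := by exact_mod_cast hn
  have hBB : (B₀ᵀ * B₀).PosSemidef := by
    simpa only [conjTranspose_eq_transpose_of_trivial] using posSemidef_conjTranspose_mul_self B₀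
  have hMt : M⁻¹ᵀ = M⁻¹ := by
    rw [transpose_nonsing_inv, hMdef, transpose_add, transpose_smul, transpose_smul, transpose_one,
      transpose_mul, transpose_transpose]
  have hFF : F * Fᵀ = R * (M⁻¹ * (B₀ᵀ * B₀) * M⁻¹) * Rᵀ := by
    rw [hFR, transpose_mul, transpose_mul, hMt, transpose_transpose, hRt]
    simp only [Matrix.mul_assoc]
  calc (F * Fᵀ).trace ≤ (α * n)⁻¹ * (R * Rᵀ).trace :=
        hFF ▸ trace_mul_mul_transpose_le (posSemidef_inv_smul_one_sub_inv_mul_mul_inv hBB hα hn') R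
    _ = S0.trace / (α * n) := by rw [hRt, hRR, inv_mul_eq_div]
end

section
/- Suppose B₀* B₀ and Σ₀ are simultaneously diagonalizable with eigenvalues of Σ₀ equal to λ_i = i^{-(1+2ε)} and eigenvalues of B₀^* B₀ denoted μ_i with C^{-2} i^{-(1+2ε+2p)} ≤ μ_i ≤ C² i^{-(1+2ε+2p)}. Then there is a constant C' such that for all n ≥ 1 and α > 0, Σ_{i=1}^∞ (1/α²) · i^{-(1+2ε+2p)-(1+2ε)} / (1 + (n/α) i^{-(1+2ε+2p)})² ≤ C' · (1/(nα)) · (n/α)^{-2ε/(1+2ε+2p)}. -/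
/-!
Write `s = 1 + 2ε + 2p`, `β = s + 1 + 2ε` and `t = n / α`: the series is
`α⁻² ∑ᵢ i^{-β} / (1 + t i^{-s})²` and the claim is that this is `O(α⁻² t^{(1-β)/s})`,
where `1 < β ≤ 2s`. For `t ≤ 1` the series is bounded by `∑ i^{-β}`. For `t ≥ 1` cut at
`N = ⌈t^{1/s}⌉`: below `N` the denominator is at least `t i^{-s}`, so each term is at most
`N^{2s-β} / t²` (as `2s ≥ β`), and above `N` each term is at most `i^{-β}`, whose tail is at most
`∫_N^∞ x^{-β} dx = N^{1-β} / (β - 1)`. Both pieces are `≍ N^{1-β} ≍ t^{(1-β)/s}`.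
-/

open Finset Real

noncomputable def varianceSeries (s β t : ℝ) : ℝ :=
  ∑' i : ℕ+, (i : ℝ) ^ (-β) / (1 + t * (i : ℝ) ^ (-s)) ^ 2

section

variable {s β t : ℝ}

lemma sum_range_rpow_neg_le (hβ : 1 < β) {x₀ : ℝ} (hx₀ : 0 < x₀) (a : ℕ) :
    ∑ i ∈ range a, (x₀ + ↑(i + 1)) ^ (-β) ≤ x₀ ^ (1 - β) / (β - 1) := by
  have hanti : AntitoneOn (fun x : ℝ ↦ x ^ (-β)) (Set.Icc x₀ (x₀ + a)) :=
    fun x hx _ _ hxy ↦ rpow_le_rpow_of_nonpos (hx₀.trans_le hx.1) hxy (by linarith)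
  have hzero : (0 : ℝ) ∉ Set.uIcc x₀ (x₀ + a) := by
    rw [Set.uIcc_of_le (by simp)]
    exact fun h ↦ h.1.not_gt hx₀
  calc _ ≤ ∫ x in x₀..x₀ + a, x ^ (-β) := hanti.sum_le_integral
    _ = (x₀ ^ (1 - β) - (x₀ + a) ^ (1 - β)) / (β - 1) := by
      rw [integral_rpow (.inr ⟨by linarith, hzero⟩), neg_add_eq_sub, ← neg_sub β, div_neg,
        ← neg_div, neg_sub]
    _ ≤ x₀ ^ (1 - β) / (β - 1) := by
      gcongr
      exact sub_le_self _ (by positivity)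

lemma div_one_add_mul_rpow_neg_sq_le_rpow_neg {x : ℝ} (hx : 0 ≤ x) (ht : 0 ≤ t) :
    x ^ (-β) / (1 + t * x ^ (-s)) ^ 2 ≤ x ^ (-β) :=
  div_le_self (by positivity) (one_le_pow₀ (le_add_of_nonneg_right (by positivity)))

lemma div_one_add_mul_rpow_neg_sq_le_div {x : ℝ} (hx : 0 < x) (ht : 0 < t) :
    x ^ (-β) / (1 + t * x ^ (-s)) ^ 2 ≤ x ^ (2 * s - β) / t ^ 2 := by
  have hxs : 0 < t * x ^ (-s) := by positivity
  calc x ^ (-β) / (1 + t * x ^ (-s)) ^ 2 ≤ x ^ (-β) / (t * x ^ (-s)) ^ 2 := by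
        gcongr; linarith
    _ = x ^ (2 * s - β) / t ^ 2 := by
      have hsplit : x ^ (-β) = x ^ (2 * s - β) * (x ^ (-s)) ^ 2 := by
        rw [sq, ← rpow_add hx, ← rpow_add hx]
        ring_nf
      rw [hsplit, mul_pow]
      field_simp

lemma varianceSeries_eq_tsum_nat (s β t : ℝ) :
    varianceSeries s β t =
      ∑' n : ℕ, ((n : ℝ) + 1) ^ (-β) / (1 + t * ((n : ℝ) + 1) ^ (-s)) ^ 2 := by
  rw [varianceSeries,
    tsum_pnat_eq_tsum_succ (f := fun n : ℕ ↦ (n : ℝ) ^ (-β) / (1 + t * (n : ℝ) ^ (-s)) ^ 2)]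
  push_cast
  rfl

lemma summable_nat_add_one_rpow_neg (hβ : 1 < β) :
    Summable fun n : ℕ ↦ ((n : ℝ) + 1) ^ (-β) := by
  simpa using (summable_nat_add_iff 1).mpr (summable_nat_rpow.mpr (neg_lt_neg hβ))

lemma varianceSeries_le_tsum (hβ : 1 < β) (ht : 0 ≤ t) :
    varianceSeries s β t ≤ ∑' n : ℕ, ((n : ℝ) + 1) ^ (-β) := by
  have hterm (n : ℕ) := div_one_add_mul_rpow_neg_sq_le_rpow_neg (s := s) (β := β)
    (Nat.cast_add_one_pos n).le ht
  have hsum := summable_nat_add_one_rpow_neg hβ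
  rw [varianceSeries_eq_tsum_nat]
  exact (hsum.of_nonneg_of_le (fun n ↦ by positivity) hterm).tsum_le_tsum hterm hsum

lemma varianceSeries_le_of_cutoff (hβ : 1 < β) (hβs : β ≤ 2 * s) (ht : 0 < t) {N : ℕ}
    (hN : 0 < N) :
    varianceSeries s β t ≤ (N : ℝ) ^ (1 - β) * (((N : ℝ) ^ s / t) ^ 2 + 1 / (β - 1)) := by
  set f : ℕ → ℝ := fun n ↦ ((n : ℝ) + 1) ^ (-β) / (1 + t * ((n : ℝ) + 1) ^ (-s)) ^ 2
  have hf : Summable f :=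
    (summable_nat_add_one_rpow_neg hβ).of_nonneg_of_le (fun n ↦ by positivity)
      (fun n ↦ div_one_add_mul_rpow_neg_sq_le_rpow_neg (by positivity) ht.le)
  have hN₀ : (0 : ℝ) < N := by exact_mod_cast hN
  have head : ∑ n ∈ range N, f n ≤ (N : ℝ) ^ (1 - β) * ((N : ℝ) ^ s / t) ^ 2 := by
    calc ∑ n ∈ range N, f n ≤ (range N).card • ((N : ℝ) ^ (2 * s - β) / t ^ 2) := by
          refine sum_le_card_nsmul _ _ _ fun n hn ↦ (div_one_add_mul_rpow_neg_sq_le_div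
            (by positivity) ht).trans ?_
          gcongr
          exact_mod_cast mem_range.mp hn
      _ = (N : ℝ) ^ (1 - β) * ((N : ℝ) ^ s / t) ^ 2 := by
          have hpow :
              (N : ℝ) * (N : ℝ) ^ (2 * s - β) = (N : ℝ) ^ (1 - β) * ((N : ℝ) ^ s) ^ 2 := by
            rw [sq, ← rpow_add hN₀, ← rpow_add hN₀]
            nth_rw 1 [← rpow_one (N : ℝ)]
            rw [← rpow_add hN₀]
            ring_nf
          rw [card_range, nsmul_eq_mul, div_pow, ← mul_div_assoc, hpow, mul_div_assoc]
  have tail : ∑' n, f (n + N) ≤ (N : ℝ) ^ (1 - β) / (β - 1) := by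
    refine Real.tsum_le_of_sum_range_le (fun n ↦ by positivity) fun a ↦ ?_
    refine (sum_le_sum fun n _ ↦ ?_).trans (sum_range_rpow_neg_le hβ hN₀ a)
    have hx : ((n + N : ℕ) : ℝ) + 1 = N + ↑(n + 1) := by push_cast; ring
    simp only [f, hx]
    exact div_one_add_mul_rpow_neg_sq_le_rpow_neg (by positivity) ht.le
  rw [varianceSeries_eq_tsum_nat, ← hf.sum_add_tsum_nat_add N, mul_add, mul_one_div]
  linarith

lemma varianceSeries_le_rpow_of_one_le (hβ : 1 < β) (hβs : β ≤ 2 * s) (ht : 1 ≤ t) :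
    varianceSeries s β t ≤ ((2 ^ s) ^ 2 + 1 / (β - 1)) * t ^ ((1 - β) / s) := by
  have hs : 0 < s := by linarith
  have ht₀ : 0 < t := by linarith
  set r := t ^ s⁻¹
  have hr : 1 ≤ r := one_le_rpow ht (by positivity)
  have hrN : r ≤ ⌈r⌉₊ := Nat.le_ceil r
  have hNr : (⌈r⌉₊ : ℝ) ≤ 2 * r := by linarith [Nat.ceil_lt_add_one (zero_le_one.trans hr)]
  have hN₀ : 0 < ⌈r⌉₊ := Nat.ceil_pos.mpr (by linarith)
  have hdecay : (⌈r⌉₊ : ℝ) ^ (1 - β) ≤ t ^ ((1 - β) / s) := by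
    calc (⌈r⌉₊ : ℝ) ^ (1 - β) ≤ r ^ (1 - β) :=
          rpow_le_rpow_of_nonpos (by linarith) hrN (by linarith)
      _ = t ^ ((1 - β) / s) := by rw [← rpow_mul ht₀.le, inv_mul_eq_div]
  have hratio : (⌈r⌉₊ : ℝ) ^ s / t ≤ 2 ^ s := by
    rw [div_le_iff₀ ht₀]
    calc (⌈r⌉₊ : ℝ) ^ s ≤ (2 * r) ^ s := by gcongr
      _ = 2 ^ s * t := by rw [mul_rpow zero_le_two (by linarith), rpow_inv_rpow ht₀.le hs.ne']
  calc varianceSeries s β t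
      ≤ (⌈r⌉₊ : ℝ) ^ (1 - β) * (((⌈r⌉₊ : ℝ) ^ s / t) ^ 2 + 1 / (β - 1)) :=
        varianceSeries_le_of_cutoff hβ hβs ht₀ hN₀
    _ ≤ t ^ ((1 - β) / s) * ((2 ^ s) ^ 2 + 1 / (β - 1)) := by gcongr
    _ = _ := mul_comm _ _

lemma exists_varianceSeries_le (hβ : 1 < β) (hβs : β ≤ 2 * s) :
    ∃ K, 0 < K ∧ ∀ t, 0 < t → varianceSeries s β t ≤ K * t ^ ((1 - β) / s) := by
  set Z := ∑' n : ℕ, ((n : ℝ) + 1) ^ (-β)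
  have hZ : 0 ≤ Z := tsum_nonneg fun n ↦ by positivity
  have hβ₁ : 0 < 1 / (β - 1) := by rw [one_div_pos]; linarith
  refine ⟨Z + ((2 ^ s) ^ 2 + 1 / (β - 1)), by positivity, fun t ht ↦ ?_⟩
  have hpow : 0 < t ^ ((1 - β) / s) := by positivity
  rcases le_or_gt 1 t with h1t | ht1
  · calc varianceSeries s β t ≤ ((2 ^ s) ^ 2 + 1 / (β - 1)) * t ^ ((1 - β) / s) :=
          varianceSeries_le_rpow_of_one_le hβ hβs h1t
      _ ≤ _ := mul_le_mul_of_nonneg_right (le_add_of_nonneg_left hZ) hpow.le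
  · have hs : 0 < s := by linarith
    calc varianceSeries s β t ≤ Z := varianceSeries_le_tsum hβ ht.le
      _ ≤ Z * t ^ ((1 - β) / s) :=
          le_mul_of_one_le_right hZ (one_le_rpow_of_pos_of_le_one_of_nonpos ht ht1.le
            (div_nonpos_of_nonpos_of_nonneg (by linarith) hs.le))
      _ ≤ _ := mul_le_mul_of_nonneg_right (le_add_of_nonneg_right (by positivity)) hpow.le

end

theorem kalman_variance_series_estimate_general (ε p : ℝ) (hε : 0 < ε) (hp : 0 < p) :
    ∃ C' : ℝ, 0 < C' ∧ ∀ n : ℕ, 1 ≤ n → ∀ α : ℝ, 0 < α →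
      (∑' i : ℕ+, (1 / α ^ 2) *
          (i : ℝ) ^ (-(1 + 2 * ε + 2 * p) - (1 + 2 * ε)) /
          (1 + (n / α) * (i : ℝ) ^ (-(1 + 2 * ε + 2 * p))) ^ 2) ≤
        C' * (1 / (n * α)) * ((n : ℝ) / α) ^ (-(2 * ε) / (1 + 2 * ε + 2 * p)) := by
  set s := 1 + 2 * ε + 2 * p
  obtain ⟨K, hK, hbound⟩ :=
    exists_varianceSeries_le (s := s) (β := s + (1 + 2 * ε)) (by linarith) (by linarith)
  refine ⟨K, hK, fun n hn α hα ↦ ?_⟩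
  have ht : 0 < (n : ℝ) / α := div_pos (by exact_mod_cast hn) hα
  have hseries : (∑' i : ℕ+, (1 / α ^ 2) * (i : ℝ) ^ (-s - (1 + 2 * ε)) /
      (1 + (n / α) * (i : ℝ) ^ (-s)) ^ 2) =
        1 / α ^ 2 * varianceSeries s (s + (1 + 2 * ε)) (n / α) := by
    simp only [varianceSeries, ← tsum_mul_left, mul_div_assoc, neg_add']
  have hexp : (1 - (s + (1 + 2 * ε))) / s = -1 + -(2 * ε) / s := by
    have hs : s ≠ 0 := by positivity
    field_simp
    ring
  calc _ = 1 / α ^ 2 * varianceSeries s (s + (1 + 2 * ε)) (n / α) := hseries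
    _ ≤ 1 / α ^ 2 * (K * ((n : ℝ) / α) ^ ((1 - (s + (1 + 2 * ε))) / s)) := by
      gcongr
      exact hbound _ ht
    _ = K * (1 / (n * α)) * ((n : ℝ) / α) ^ (-(2 * ε) / s) := by
      rw [hexp, rpow_add ht, rpow_neg_one]
      field_simp

/-- Series estimate for the Kalman filter variance under power-law eigenvalue
decay: with `λ_i = i^{-(1+2ε)}` and `C⁻² i^{-(1+2ε+2p)} ≤ μ_i ≤ C² i^{-(1+2ε+2p)}`,
there is `C'` such that for all `n ≥ 1`, `α > 0`,
`∑_{i=1}^∞ α⁻² i^{-(1+2ε+2p)-(1+2ε)} / (1 + (n/α) i^{-(1+2ε+2p)})² ≤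
  C' (1/(nα)) (n/α)^{-2ε/(1+2ε+2p)}`. -/
theorem kalman_variance_series_estimate (ε p C : ℝ) (hε : 0 < ε) (hp : 0 < p)
    (hC : 1 ≤ C) (lam μ : ℕ+ → ℝ)
    (hlam : ∀ i : ℕ+, lam i = (i : ℝ) ^ (-(1 + 2 * ε)))
    (hμ : ∀ i : ℕ+, C⁻¹ ^ 2 * (i : ℝ) ^ (-(1 + 2 * ε + 2 * p)) ≤ μ i ∧
      μ i ≤ C ^ 2 * (i : ℝ) ^ (-(1 + 2 * ε + 2 * p))) :
    ∃ C' : ℝ, 0 < C' ∧ ∀ n : ℕ, 1 ≤ n → ∀ α : ℝ, 0 < α →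
      (∑' i : ℕ+, (1 / α ^ 2) *
          (i : ℝ) ^ (-(1 + 2 * ε + 2 * p) - (1 + 2 * ε)) /
          (1 + (n / α) * (i : ℝ) ^ (-(1 + 2 * ε + 2 * p))) ^ 2) ≤
        C' * (1 / (n * α)) * ((n : ℝ) / α) ^ (-(2 * ε) / (1 + 2 * ε + 2 * p)) :=
  kalman_variance_series_estimate_general ε p hε hp
end

section
/- Let ε > 0, p > 0 and set r = 1 + 2ε + 2p. There is a constant C such that for all α > 0 and all integers j ≥ 0, Σ_{i=1}^∞ (1/α²) i^{-2-4ε-2p}/(1 + (1/α) i^{-r})^{2j+2} ≤ C (1/(j+1))^{1 + 2ε/r} α^{-(1+2p)/r}. -/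
/-!
Write `K = j + 1`, `δ = 1 + 4ε + 2p` and `x = α⁻¹ i^{-r}`. Since
`(1 + x)^{2K} ≥ (1 + K x)^2 ≥ K² x²`, the `i`-th term is at most `i^{2p} / K²`; it is also at most
`α⁻² i^{-1-δ}`. Use the first bound for `i ≤ T = (K / α)^{1/r}` and the second beyond `T`, where
the tail of `∑ i^{-1-δ}` telescopes against `k^{-δ} - (k+1)^{-δ}` by convexity of `t ↦ t^{-δ}`.
Both pieces are of order `K^{-δ/r} α^{δ/r - 2}`, and `δ / r = 1 + 2ε / r`,
`δ / r - 2 = -(1 + 2p) / r`.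
-/

open Real

theorem mul_sub_mul_rpow_le_rpow_neg_sub_rpow_neg {a b δ : ℝ} (ha : 0 < a) (hb : 0 < b)
    (hδ : 0 ≤ δ) : δ * (b - a) * b ^ (-(1 + δ)) ≤ a ^ (-δ) - b ^ (-δ) := by
  have hlog : 1 - a / b ≤ log (b / a) := by
    have := log_le_sub_one_of_pos (div_pos ha hb)
    rw [log_div ha.ne' hb.ne'] at this
    rw [log_div hb.ne' ha.ne']
    linarith
  have hexp : 1 + δ * (1 - a / b) ≤ (b / a) ^ δ := by
    rw [rpow_def_of_pos (div_pos hb ha)]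
    nlinarith [add_one_le_exp (log (b / a) * δ)]
  have ha' : a ^ (-δ) = b ^ (-δ) * (b / a) ^ δ := by
    rw [div_rpow hb.le ha.le, rpow_neg ha.le, rpow_neg hb.le]
    field_simp
  have hb' : b ^ (-(1 + δ)) = b ^ (-δ) / b := by
    rw [show -(1 + δ) = -δ - 1 by ring, rpow_sub hb, rpow_one]
  calc δ * (b - a) * b ^ (-(1 + δ)) = b ^ (-δ) * (δ * (1 - a / b)) := by
        rw [hb']; field_simp
    _ ≤ b ^ (-δ) * ((b / a) ^ δ - 1) := by gcongr; linarith
    _ = a ^ (-δ) - b ^ (-δ) := by rw [ha']; ring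

theorem sum_range_add_nat_succ_rpow_neg_le {x δ : ℝ} (hx : 0 < x) (hδ : 0 < δ) (M : ℕ) :
    ∑ n ∈ Finset.range M, (x + (n + 1)) ^ (-(1 + δ)) ≤ (x ^ (-δ) - (x + M) ^ (-δ)) / δ := by
  induction M with
  | zero => simp
  | succ M ih =>
    have hstep := mul_sub_mul_rpow_le_rpow_neg_sub_rpow_neg (a := x + M) (b := x + (M + 1))
      (by positivity) (by positivity) hδ.le
    rw [Finset.sum_range_succ, Nat.cast_succ, le_div_iff₀ hδ]
    rw [le_div_iff₀ hδ] at ih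
    nlinarith

theorem sum_range_add_nat_rpow_neg_le {x δ : ℝ} (hx : 1 ≤ x) (hδ : 0 < δ) (M : ℕ) :
    ∑ n ∈ Finset.range M, (x + n) ^ (-(1 + δ)) ≤ (1 + δ⁻¹) * x ^ (-δ) := by
  have hx0 : 0 < x := by linarith
  have hhead : x ^ (-(1 + δ)) ≤ x ^ (-δ) := rpow_le_rpow_of_exponent_le hx (by linarith)
  have htail : ∑ n ∈ Finset.range M, (x + (n + 1)) ^ (-(1 + δ)) ≤ x ^ (-δ) / δ :=
    (sum_range_add_nat_succ_rpow_neg_le hx0 hδ M).trans <| by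
      gcongr; exact sub_le_self _ (by positivity)
  calc ∑ n ∈ Finset.range M, (x + n) ^ (-(1 + δ))
      ≤ ∑ n ∈ Finset.range (M + 1), (x + n) ^ (-(1 + δ)) :=
        Finset.sum_le_sum_of_subset_of_nonneg (by simp) fun n _ _ => by positivity
    _ = ∑ n ∈ Finset.range M, (x + (n + 1)) ^ (-(1 + δ)) + x ^ (-(1 + δ)) := by
        rw [Finset.sum_range_succ']; push_cast; simp
    _ ≤ (1 + δ⁻¹) * x ^ (-δ) := by rw [div_eq_inv_mul] at htail; linarith

theorem one_add_mul_sq_le_pow {x : ℝ} (hx : 0 ≤ x) (n : ℕ) :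
    (1 + n * x) ^ 2 ≤ (1 + x) ^ (2 * n) := by
  rw [pow_mul']
  exact pow_le_pow_left₀ (by positivity) (one_add_mul_le_pow (by linarith) n) 2

theorem div_one_add_pow_le_div_sq {c a : ℝ} (hc : 0 ≤ c) (ha : 0 < a) (j : ℕ) :
    c / (1 + a) ^ (2 * j + 2) ≤ c / ((j + 1) * a) ^ 2 := by
  have h := one_add_mul_sq_le_pow ha.le (j + 1)
  push_cast at h
  apply div_le_div_of_nonneg_left hc (by positivity)
  calc ((j + 1) * a) ^ 2 ≤ (1 + (j + 1) * a) ^ 2 := by gcongr; linarith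
    _ ≤ (1 + a) ^ (2 * j + 2) := by rwa [show 2 * j + 2 = 2 * (j + 1) by ring]

/-- With `r = 1 + 2ε + 2p` and `δ = 1 + 4ε + 2p`, `varianceTerm r δ α j i` is the `i`-th term of
the series. -/
noncomputable def varianceTerm (r δ α : ℝ) (j : ℕ) (x : ℝ) : ℝ :=
  1 / α ^ 2 * x ^ (-(1 + δ)) / (1 + 1 / α * x ^ (-r)) ^ (2 * j + 2)

section varianceTerm

variable {r δ α : ℝ} (j : ℕ) {x : ℝ}

theorem varianceTerm_nonneg (hα : 0 < α) (hx : 0 < x) : 0 ≤ varianceTerm r δ α j x := by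
  unfold varianceTerm; positivity

theorem varianceTerm_le (hα : 0 < α) (hx : 0 < x) :
    varianceTerm r δ α j x ≤ 1 / α ^ 2 * x ^ (-(1 + δ)) :=
  div_le_self (by positivity) (one_le_pow₀ (le_add_of_nonneg_right (by positivity)))

theorem varianceTerm_le_rpow_div_sq (hα : 0 < α) (hx : 0 < x) :
    varianceTerm r δ α j x ≤ x ^ (2 * r - (1 + δ)) / (j + 1) ^ 2 := by
  refine (div_one_add_pow_le_div_sq (by positivity) (by positivity) j).trans_eq ?_
  have hsq : (x ^ (-r)) ^ 2 = x ^ (-(1 + δ)) / x ^ (2 * r - (1 + δ)) := by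
    rw [← rpow_sub hx, ← rpow_natCast, ← rpow_mul hx.le]; ring_nf
  rw [mul_pow, mul_pow, hsq]
  field_simp

theorem sum_range_varianceTerm_le (hα : 0 < α) (hrδ : 1 + δ ≤ 2 * r) (N : ℕ) :
    ∑ n ∈ Finset.range N, varianceTerm r δ α j (n + 1) ≤
      (N : ℝ) ^ (2 * r - δ) / (j + 1) ^ 2 := by
  calc ∑ n ∈ Finset.range N, varianceTerm r δ α j (n + 1)
      ≤ ∑ _n ∈ Finset.range N, (N : ℝ) ^ (2 * r - (1 + δ)) / (j + 1) ^ 2 := by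
        refine Finset.sum_le_sum fun n hn =>
          (varianceTerm_le_rpow_div_sq j hα (by positivity)).trans ?_
        have hnN : (n : ℝ) + 1 ≤ N := by exact_mod_cast Finset.mem_range.mp hn
        gcongr
    _ = (N : ℝ) ^ (2 * r - δ) / (j + 1) ^ 2 := by
        rcases N.eq_zero_or_pos with rfl | hN
        · simp [zero_rpow (by linarith : 2 * r - δ ≠ 0)]
        rw [Finset.sum_const, Finset.card_range, nsmul_eq_mul,
          show 2 * r - δ = 1 + (2 * r - (1 + δ)) by ring, rpow_add (by positivity), rpow_one,
          mul_div_assoc]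

theorem sum_range_varianceTerm_add_nat_le (hα : 0 < α) (hδ : 0 < δ) (hx : 1 ≤ x) (M : ℕ) :
    ∑ n ∈ Finset.range M, varianceTerm r δ α j (x + n) ≤
      1 / α ^ 2 * ((1 + δ⁻¹) * x ^ (-δ)) := by
  calc ∑ n ∈ Finset.range M, varianceTerm r δ α j (x + n)
      ≤ ∑ n ∈ Finset.range M, 1 / α ^ 2 * (x + n) ^ (-(1 + δ)) :=
        Finset.sum_le_sum fun n _ => varianceTerm_le j hα (by positivity)
    _ ≤ 1 / α ^ 2 * ((1 + δ⁻¹) * x ^ (-δ)) := by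
        rw [← Finset.mul_sum]; gcongr; exact sum_range_add_nat_rpow_neg_le hx hδ M

end varianceTerm

theorem tsum_varianceTerm_le {r δ α : ℝ} (hr : 0 < r) (hδ : 0 < δ) (hrδ : 1 + δ ≤ 2 * r)
    (hα : 0 < α) (j : ℕ) :
    ∑' i : ℕ+, varianceTerm r δ α j i ≤
      (2 + δ⁻¹) * ((j : ℝ) + 1) ^ (-(δ / r)) * α ^ (δ / r - 2) := by
  set K : ℝ := (j : ℝ) + 1
  have hK : 0 < K := by positivity
  set T : ℝ := (K / α) ^ r⁻¹
  have hT : 0 < T := by positivity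
  set N : ℕ := ⌊T⌋₊
  have hNT : (N : ℝ) ≤ T := Nat.floor_le hT.le
  have hTN : T ≤ N + 1 := (Nat.lt_floor_add_one T).le
  have hhead : T ^ (2 * r - δ) / K ^ 2 = K ^ (-(δ / r)) * α ^ (δ / r - 2) := by
    rw [← rpow_mul (by positivity), show r⁻¹ * (2 * r - δ) = 2 - δ / r by field_simp,
      div_rpow hK.le hα.le, rpow_sub hK, rpow_sub hα, rpow_sub hα, rpow_neg hK.le, rpow_two,
      rpow_two]
    field_simp
  have htail : 1 / α ^ 2 * T ^ (-δ) = K ^ (-(δ / r)) * α ^ (δ / r - 2) := by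
    rw [← rpow_mul (by positivity), show r⁻¹ * -δ = -(δ / r) by ring, div_rpow hK.le hα.le,
      rpow_sub hα, rpow_neg hK.le, rpow_neg hα.le, rpow_two]
    field_simp
  rw [tsum_pnat_eq_tsum_succ (f := fun n : ℕ => varianceTerm r δ α j n)]
  refine Real.tsum_le_of_sum_range_le (fun n => varianceTerm_nonneg j hα (by positivity))
    fun M => ?_
  push_cast
  calc ∑ n ∈ Finset.range M, varianceTerm r δ α j (n + 1)
      ≤ ∑ n ∈ Finset.range (N + M), varianceTerm r δ α j (n + 1) :=
        Finset.sum_le_sum_of_subset_of_nonneg (Finset.range_mono (by omega))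
          fun n _ _ => varianceTerm_nonneg j hα (by positivity)
    _ = ∑ n ∈ Finset.range N, varianceTerm r δ α j (n + 1)
          + ∑ n ∈ Finset.range M, varianceTerm r δ α j ((N + 1 : ℝ) + n) := by
        rw [Finset.sum_range_add]; push_cast; ring_nf
    _ ≤ (N : ℝ) ^ (2 * r - δ) / K ^ 2 + 1 / α ^ 2 * ((1 + δ⁻¹) * (N + 1 : ℝ) ^ (-δ)) :=
        add_le_add (sum_range_varianceTerm_le j hα hrδ N)
          (sum_range_varianceTerm_add_nat_le j hα hδ (by linarith [N.cast_nonneg (α := ℝ)]) M)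
    _ ≤ T ^ (2 * r - δ) / K ^ 2 + 1 / α ^ 2 * ((1 + δ⁻¹) * T ^ (-δ)) := by
        have hNT' : (N : ℝ) ^ (2 * r - δ) ≤ T ^ (2 * r - δ) :=
          rpow_le_rpow (by positivity) hNT (by linarith)
        have hTN' : (N + 1 : ℝ) ^ (-δ) ≤ T ^ (-δ) :=
          rpow_le_rpow_of_nonpos hT hTN (by linarith)
        gcongr
    _ = (2 + δ⁻¹) * K ^ (-(δ / r)) * α ^ (δ / r - 2) := by
        rw [mul_left_comm, hhead, htail]; ring

/-- Series estimate for the 3DVAR variance under power-law eigenvalue decay: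
with `r = 1 + 2ε + 2p`, there is `C` such that for all `α > 0` and `j ≥ 0`,
`∑_{i=1}^∞ α⁻² i^{-2-4ε-2p}/(1 + α⁻¹ i^{-r})^{2j+2} ≤
  C (1/(j+1))^{1+2ε/r} α^{-(1+2p)/r}`. -/
theorem threeDVAR_variance_series_estimate (ε p : ℝ) (hε : 0 < ε) (hp : 0 < p) :
    ∃ C : ℝ, 0 < C ∧ ∀ α : ℝ, 0 < α → ∀ j : ℕ,
      (∑' i : ℕ+, (1 / α ^ 2) * (i : ℝ) ^ (-2 - 4 * ε - 2 * p) /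
          (1 + (1 / α) * (i : ℝ) ^ (-(1 + 2 * ε + 2 * p))) ^ (2 * j + 2)) ≤
        C * (1 / ((j : ℝ) + 1)) ^ (1 + 2 * ε / (1 + 2 * ε + 2 * p)) *
          α ^ (-(1 + 2 * p) / (1 + 2 * ε + 2 * p)) := by
  set r := 1 + 2 * ε + 2 * p
  set δ := 1 + 4 * ε + 2 * p
  have hr : 0 < r := by positivity
  have hδ : 0 < δ := by positivity
  refine ⟨2 + δ⁻¹, by positivity, fun α hα j => ?_⟩
  have hs : 1 + 2 * ε / r = δ / r := by field_simp; ring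
  have ht : -(1 + 2 * p) / r = δ / r - 2 := by field_simp; ring
  have hK : (1 / ((j : ℝ) + 1)) ^ (δ / r) = ((j : ℝ) + 1) ^ (-(δ / r)) := by
    rw [rpow_neg (by positivity), one_div, inv_rpow (by positivity)]
  rw [show -2 - 4 * ε - 2 * p = -(1 + δ) by ring, hs, ht, hK]
  exact tsum_varianceTerm_le hr hδ (by linarith) hα j
end
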